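/- arXiv:0909.0633 — 2 statements merged into one kernel-verified Lean document; each statement's English description precedes it below -/
import Mathlib

section
/- Let (A(τ))_{τ ∈ ℕ} be a discrete-time process with A(0) = 0 and A(τ) = λτ + Z(τ), where each Z(τ) is centered Gaussian with variance σ²τ^(2H), σ > 0, H ∈ (1/2,1). Fix β ∈ (0,1−H), η ∈ (0,1), and set E(τ) = λτ + √(−2 log η)·σ·τ^(H+β). Then P[∃ τ ≥ 0: A(τ) > E(τ)] ≤ Γ(1/(2β)) / (2β · (−log η)^(1/(2β))). -/
/-! At each time `τ ≥ 1` the centred Gaussian `Z τ` is sub-Gaussian, so the Chernoff bound makes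
the envelope crossing at `τ` at most `exp (-b τ^(2β)) = η^(τ^(2β))`, where `b = -log η`; at
`τ = 0` the envelope is never crossed. A union bound over `τ` and the integral test then bound
the probability by `∫₀^∞ exp (-b t^(2β)) dt = Γ(1/(2β)) / (2β b^(1/(2β)))`. -/

open Real Set MeasureTheory ProbabilityTheory
open scoped NNReal ENNReal

section GaussianTail

variable {Ω : Type*} [MeasurableSpace Ω] {μ : Measure Ω} {X : Ω → ℝ} {v : ℝ≥0}

lemma ProbabilityTheory.HasSubgaussianMGF.of_map_eq_gaussianReal
    (hX : μ.map X = gaussianReal 0 v) : HasSubgaussianMGF X v μ := by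
  have hXm : AEMeasurable X μ := aemeasurable_of_map_neZero (by rw [hX]; infer_instance)
  refine (HasSubgaussianMGF.id_map_iff hXm).1 ?_
  rw [hX]
  exact ⟨integrable_exp_mul_gaussianReal, fun t ↦ by simp [mgf_id_gaussianReal]⟩

lemma measure_lt_le_exp_of_map_eq_gaussianReal [IsFiniteMeasure μ]
    (hX : μ.map X = gaussianReal 0 v) {ε : ℝ} (hε : 0 ≤ ε) :
    μ {ω | ε < X ω} ≤ ENNReal.ofReal (exp (-ε ^ 2 / (2 * v))) :=
  calc μ {ω | ε < X ω} ≤ μ {ω | ε ≤ X ω} :=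
        measure_mono (ofPred_subset_ofPred.2 fun _ ↦ le_of_lt)
    _ = ENNReal.ofReal (μ.real {ω | ε ≤ X ω}) :=
        (ofReal_measureReal (measure_ne_top _ _)).symm
    _ ≤ _ := ENNReal.ofReal_le_ofReal
      ((HasSubgaussianMGF.of_map_eq_gaussianReal hX).measure_ge_le hε)

end GaussianTail

lemma tsum_exp_neg_mul_rpow_succ_le {b p : ℝ} (hb : 0 < b) (hp : 0 < p) :
    ∑' n : ℕ, ENNReal.ofReal (exp (-b * ((n + 1 : ℕ) : ℝ) ^ p)) ≤
      ENNReal.ofReal (Gamma (1 / p) / (p * b ^ (1 / p))) := by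
  set f : ℝ → ℝ := fun t ↦ exp (-b * t ^ p)
  have anti : AntitoneOn f (Ici 0) := fun s hs t _ hst ↦ by
    have := rpow_le_rpow hs hst hp.le
    exact exp_le_exp.2 (by nlinarith)
  have integrable : IntegrableOn f (Ioi 0) :=
    (integrableOn_rpow_mul_exp_neg_mul_rpow neg_one_lt_zero hp hb).congr_fun
      (fun t _ ↦ by simp [f]) measurableSet_Ioi
  have nonneg : ∀ t ∈ Ioi (0 : ℝ), 0 ≤ f t := fun _ _ ↦ (exp_pos _).le
  have summable : Summable fun n : ℕ ↦ f (n + 1 : ℕ) :=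
    (summable_nat_add_iff 1).2 (anti.summable_of_integrableOn_Ioi_zero integrable nonneg)
  rw [← ENNReal.ofReal_tsum_of_nonneg (fun _ ↦ (exp_pos _).le) summable]
  refine ENNReal.ofReal_le_ofReal ((anti.tsum_add_one_le_integral integrable nonneg).trans_eq ?_)
  rw [integral_exp_neg_mul_rpow hp hb, Gamma_add_one (one_div_ne_zero hp.ne'),
    show -1 / p = -(1 / p) by ring, rpow_neg hb.le]
  field_simp

lemma envelope_sq_div_variance {b σ t H β : ℝ} (hb : 0 ≤ b) (hσ : σ ≠ 0) (ht : 0 < t) :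
    (√(2 * b) * σ * t ^ (H + β)) ^ 2 / (2 * (σ ^ 2 * t ^ (2 * H))) = b * t ^ (2 * β) := by
  have hpow : (t ^ (H + β)) ^ 2 = t ^ (2 * H) * t ^ (2 * β) := by
    rw [← rpow_add ht, ← rpow_mul_natCast ht.le]
    ring_nf
  rw [mul_pow, mul_pow, sq_sqrt (by positivity), hpow]
  field_simp

theorem fbm_sample_path_envelope_general {Ω : Type*} [MeasurableSpace Ω] (μ : Measure Ω)
    [IsProbabilityMeasure μ] (A Z : ℕ → Ω → ℝ) (lam σ H β η : ℝ)
    (hσ : 0 < σ) (hβ : β ∈ Set.Ioo (0:ℝ) (1 - H))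
    (hη : η ∈ Set.Ioo (0:ℝ) 1)
    (hA0 : ∀ ω, A 0 ω = 0)
    (hA : ∀ τ : ℕ, ∀ ω, A τ ω = lam * τ + Z τ ω)
    (hZ : ∀ τ : ℕ, 1 ≤ τ →
      Measure.map (Z τ) μ = gaussianReal 0 (Real.toNNReal (σ ^ 2 * (τ : ℝ) ^ (2 * H)))) :
    μ {ω | ∃ τ : ℕ, A τ ω >
        lam * τ + Real.sqrt (-2 * Real.log η) * σ * (τ : ℝ) ^ (H + β)} ≤
      ENNReal.ofReal (Real.Gamma (1 / (2 * β)) / (2 * β * (-Real.log η) ^ (1 / (2 * β)))) := by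
  have hb : 0 < -log η := neg_pos.2 (log_neg hη.1 hη.2)
  rw [show -2 * log η = 2 * -log η by ring]
  set c : ℕ → ℝ := fun τ ↦ √(2 * -log η) * σ * (τ : ℝ) ^ (H + β)
  have hsub :
      {ω | ∃ τ : ℕ, A τ ω > lam * τ + c τ} ⊆ ⋃ n : ℕ, {ω | c (n + 1) < Z (n + 1) ω} := by
    rintro ω ⟨_ | n, hτ⟩
    · have : 0 ≤ c 0 := by simp only [c]; positivity
      simp only [hA0, Nat.cast_zero, mul_zero, zero_add] at hτ
      exact absurd hτ this.not_gt
    · exact mem_iUnion.2 ⟨n, by simpa [hA] using hτ⟩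
  have hterm (n : ℕ) : μ {ω | c (n + 1) < Z (n + 1) ω} ≤
      ENNReal.ofReal (exp (- -log η * ((n + 1 : ℕ) : ℝ) ^ (2 * β))) := by
    have hτ : (0 : ℝ) < (n + 1 : ℕ) := by positivity
    refine (measure_lt_le_exp_of_map_eq_gaussianReal (hZ (n + 1) (Nat.le_add_left 1 n))
      (by positivity)).trans_eq ?_
    rw [Real.coe_toNNReal _ (by positivity), neg_div,
      envelope_sq_div_variance hb.le hσ.ne' hτ, ← neg_mul]
  calc _ ≤ μ (⋃ n : ℕ, {ω | c (n + 1) < Z (n + 1) ω}) := measure_mono hsub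
    _ ≤ ∑' n : ℕ, μ {ω | c (n + 1) < Z (n + 1) ω} := measure_iUnion_le _
    _ ≤ _ := ENNReal.tsum_le_tsum hterm
    _ ≤ _ := tsum_exp_neg_mul_rpow_succ_le hb (by linarith [hβ.1])

theorem fbm_sample_path_envelope {Ω : Type*} [MeasurableSpace Ω] (μ : Measure Ω)
    [IsProbabilityMeasure μ] (A Z : ℕ → Ω → ℝ) (lam σ H β η : ℝ)
    (hσ : 0 < σ) (hH : H ∈ Set.Ioo (1/2 : ℝ) 1) (hβ : β ∈ Set.Ioo (0:ℝ) (1 - H))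
    (hη : η ∈ Set.Ioo (0:ℝ) 1)
    (hA0 : ∀ ω, A 0 ω = 0)
    (hA : ∀ τ : ℕ, ∀ ω, A τ ω = lam * τ + Z τ ω)
    (hZ : ∀ τ : ℕ, 1 ≤ τ →
      Measure.map (Z τ) μ = gaussianReal 0 (Real.toNNReal (σ ^ 2 * (τ : ℝ) ^ (2 * H)))) :
    μ {ω | ∃ τ : ℕ, A τ ω >
        lam * τ + Real.sqrt (-2 * Real.log η) * σ * (τ : ℝ) ^ (H + β)} ≤
      ENNReal.ofReal (Real.Gamma (1 / (2 * β)) / (2 * β * (-Real.log η) ^ (1 / (2 * β)))) :=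
  fbm_sample_path_envelope_general μ A Z lam σ H β η hσ hβ hη hA0 hA hZ
end

section
/- Let c₁, c₂ > 0, H ∈ (1/2,1), and for n ≥ 2 define f(n, b) = n^(1−H) · c₁ · b^(1+H) · exp(−c₂ · b^(2−2H) · n^(2H−2)). If b = n·(c₀ log n)^(1/(2−2H)) with c₀ > 2/c₂, then f(n, b) ≤ (c₀ log n)^((1+H)/(2−2H)) · c₁ · n^(2−c₀c₂), and hence f(n,b) is bounded above by a constant independent of n. -/
/-!
With `L = c₀ log n` and `b = n L^(1/(2-2H))`, the exponent `c₂ b^(2-2H) n^(2H-2)` collapses to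
`c₂ L = c₀ c₂ log n`, so the exponential factor is exactly `n^(-c₀ c₂)`, while the prefactor is
`c₁ n² L^((1+H)/(2-2H))`. Since `c₀ c₂ > 2`, the power `n^(2 - c₀ c₂)` beats any power of
`log n`, so the profile tends to `0` and is in particular bounded.
-/

open Real Filter Topology Asymptotics

noncomputable def deficitProfile (c₁ c₂ H n b : ℝ) : ℝ :=
  n ^ (1 - H) * c₁ * b ^ (1 + H) * exp (-c₂ * b ^ (2 - 2 * H) * n ^ (2 * H - 2))

section Substitution

variable {c₁ c₂ H : ℝ}

theorem deficitProfile_mul_rpow_inv {x L : ℝ} (hx : 0 < x) (hL : 0 ≤ L) (hH : H ≠ 1) :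
    deficitProfile c₁ c₂ H x (x * L ^ (1 / (2 - 2 * H))) =
      L ^ ((1 + H) / (2 - 2 * H)) * c₁ * x ^ (2 : ℝ) * exp (-c₂ * L) := by
  have h2H : 2 - 2 * H ≠ 0 := by intro h; exact hH (by linarith)
  have hpow : ∀ p : ℝ, (x * L ^ (1 / (2 - 2 * H))) ^ p = x ^ p * L ^ (p / (2 - 2 * H)) := by
    intro p
    rw [mul_rpow hx.le (rpow_nonneg hL _), ← rpow_mul hL, one_div_mul_eq_div]
  have hcancel : x ^ (2 - 2 * H) * x ^ (2 * H - 2) = 1 := by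
    rw [← rpow_add hx, show 2 - 2 * H + (2 * H - 2) = 0 by ring, rpow_zero]
  have hsq : x ^ (1 - H) * x ^ (1 + H) = x ^ (2 : ℝ) := by
    rw [← rpow_add hx]; ring_nf
  rw [deficitProfile, hpow, hpow, div_self h2H, rpow_one]
  calc x ^ (1 - H) * c₁ * (x ^ (1 + H) * L ^ ((1 + H) / (2 - 2 * H))) *
        exp (-c₂ * (x ^ (2 - 2 * H) * L) * x ^ (2 * H - 2))
      = L ^ ((1 + H) / (2 - 2 * H)) * c₁ * (x ^ (1 - H) * x ^ (1 + H)) *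
          exp (-c₂ * L * (x ^ (2 - 2 * H) * x ^ (2 * H - 2))) := by ring_nf
    _ = L ^ ((1 + H) / (2 - 2 * H)) * c₁ * x ^ (2 : ℝ) * exp (-c₂ * L) := by
      rw [hsq, hcancel, mul_one]

theorem deficitProfile_log_scaling {c₀ x : ℝ} (hc₀ : 0 ≤ c₀) (hx : 1 ≤ x) (hH : H ≠ 1) :
    deficitProfile c₁ c₂ H x (x * (c₀ * log x) ^ (1 / (2 - 2 * H))) =
      (c₀ * log x) ^ ((1 + H) / (2 - 2 * H)) * c₁ * x ^ (2 - c₀ * c₂) := by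
  have hx₀ : 0 < x := one_pos.trans_le hx
  have hexp : exp (-c₂ * (c₀ * log x)) = x ^ (-(c₀ * c₂)) := by
    rw [rpow_def_of_pos hx₀]; ring_nf
  rw [deficitProfile_mul_rpow_inv hx₀ (mul_nonneg hc₀ (log_nonneg hx)) hH, hexp,
    mul_assoc _ (x ^ _), ← rpow_add hx₀, ← sub_eq_add_neg]

end Substitution

theorem isLittleO_const_mul_log_rpow_rpow_atTop {c : ℝ} (hc : 0 ≤ c) (β : ℝ) {δ : ℝ}
    (hδ : 0 < δ) :
    (fun x => (c * log x) ^ β) =o[atTop] fun x => x ^ δ := by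
  refine ((isLittleO_log_rpow_rpow_atTop β hδ).const_mul_left (c ^ β)).congr' ?_ EventuallyEq.rfl
  filter_upwards [eventually_ge_atTop 1] with x hx
  exact (mul_rpow hc (log_nonneg hx)).symm

theorem tendsto_const_mul_log_rpow_mul_rpow_neg_atTop {c : ℝ} (hc : 0 ≤ c) (β : ℝ) {δ : ℝ}
    (hδ : 0 < δ) : Tendsto (fun x => (c * log x) ^ β * x ^ (-δ)) atTop (𝓝 0) := by
  refine (isLittleO_const_mul_log_rpow_rpow_atTop hc β hδ).tendsto_div_nhds_zero.congr' ?_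
  filter_upwards [eventually_ge_atTop 0] with x hx
  rw [rpow_neg hx, div_eq_mul_inv]

theorem scaling_bound_general (c₀ c₁ c₂ H : ℝ) (hc₂ : 0 < c₂)
    (hH : H ∈ Set.Ioo (1/2 : ℝ) 1) (hc₀ : c₀ > 2 / c₂) :
    (∀ n : ℕ, 2 ≤ n →
        (n : ℝ) ^ (1 - H) * c₁ * ((n : ℝ) * (c₀ * Real.log n) ^ (1 / (2 - 2 * H))) ^ (1 + H) *
            Real.exp (-c₂ * ((n : ℝ) * (c₀ * Real.log n) ^ (1 / (2 - 2 * H))) ^ (2 - 2 * H) *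
              (n : ℝ) ^ (2 * H - 2)) ≤
          (c₀ * Real.log n) ^ ((1 + H) / (2 - 2 * H)) * c₁ * (n : ℝ) ^ (2 - c₀ * c₂)) ∧
      ∃ M : ℝ, ∀ n : ℕ, 2 ≤ n →
        (n : ℝ) ^ (1 - H) * c₁ * ((n : ℝ) * (c₀ * Real.log n) ^ (1 / (2 - 2 * H))) ^ (1 + H) *
            Real.exp (-c₂ * ((n : ℝ) * (c₀ * Real.log n) ^ (1 / (2 - 2 * H))) ^ (2 - 2 * H) *
              (n : ℝ) ^ (2 * H - 2)) ≤ M := by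
  have hc₀_nonneg : 0 ≤ c₀ := ((div_pos two_pos hc₂).trans hc₀).le
  have hδ : 0 < c₀ * c₂ - 2 := by linarith [(div_lt_iff₀ hc₂).mp hc₀]
  have hscaling (n : ℕ) (hn : 2 ≤ n) :
      deficitProfile c₁ c₂ H n (n * (c₀ * log n) ^ (1 / (2 - 2 * H))) =
        (c₀ * log n) ^ ((1 + H) / (2 - 2 * H)) * c₁ * (n : ℝ) ^ (2 - c₀ * c₂) :=
    deficitProfile_log_scaling hc₀_nonneg (by exact_mod_cast one_le_two.trans hn) hH.2.ne
  refine ⟨fun n hn => (hscaling n hn).le, ?_⟩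
  have hlim : Tendsto (fun n : ℕ => deficitProfile c₁ c₂ H n (n * (c₀ * log n) ^ (1 / (2 - 2 * H))))
      atTop (𝓝 0) := by
    have := ((tendsto_const_mul_log_rpow_mul_rpow_neg_atTop hc₀_nonneg ((1 + H) / (2 - 2 * H))
      hδ).const_mul c₁).comp tendsto_natCast_atTop_atTop
    rw [mul_zero] at this
    refine this.congr' ?_
    filter_upwards [eventually_ge_atTop 2] with n hn
    rw [Function.comp_apply, hscaling n hn, neg_sub]
    ring
  obtain ⟨M, hM⟩ := hlim.bddAbove_range
  exact ⟨M, fun n _ => hM ⟨n, rfl⟩⟩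

theorem scaling_bound (c₀ c₁ c₂ H : ℝ) (hc₁ : 0 < c₁) (hc₂ : 0 < c₂)
    (hH : H ∈ Set.Ioo (1/2 : ℝ) 1) (hc₀ : c₀ > 2 / c₂) :
    (∀ n : ℕ, 2 ≤ n →
        (n : ℝ) ^ (1 - H) * c₁ * ((n : ℝ) * (c₀ * Real.log n) ^ (1 / (2 - 2 * H))) ^ (1 + H) *
            Real.exp (-c₂ * ((n : ℝ) * (c₀ * Real.log n) ^ (1 / (2 - 2 * H))) ^ (2 - 2 * H) *
              (n : ℝ) ^ (2 * H - 2)) ≤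
          (c₀ * Real.log n) ^ ((1 + H) / (2 - 2 * H)) * c₁ * (n : ℝ) ^ (2 - c₀ * c₂)) ∧
      ∃ M : ℝ, ∀ n : ℕ, 2 ≤ n →
        (n : ℝ) ^ (1 - H) * c₁ * ((n : ℝ) * (c₀ * Real.log n) ^ (1 / (2 - 2 * H))) ^ (1 + H) *
            Real.exp (-c₂ * ((n : ℝ) * (c₀ * Real.log n) ^ (1 / (2 - 2 * H))) ^ (2 - 2 * H) *
              (n : ℝ) ^ (2 * H - 2)) ≤ M :=
  scaling_bound_general c₀ c₁ c₂ H hc₂ hH hc₀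
end
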